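/- Let ℓ: ℝ^p → ℝ be convex and differentiable, a ∈ (0,1), λ > 0, and let β̂ be a minimizer over ℝ^p of β ↦ ℓ(β) + λ Σ_{k=1}^r ‖W_k β_k‖. Assume that |W^{-1} ∇ℓ(β°)|_∞ ≤ aλ and that the cone invertibility factor satisfies ζ_{a,W} > 0. Then |β̂ − β°|_∞ ≤ (1 + a) λ / ζ_{a,W}. -/

import Mathlib

/-!
At the minimiser β̂, moving one coordinate by `t` changes the penalty by at most `λ |w_c t|`, so
the first-order condition gives `|∂_c ℓ(β̂)| ≤ λ w_c`; together with `|W⁻¹∇ℓ(β°)|_∞ ≤ aλ` this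
bounds `|W⁻¹(∇ℓ(β̂) − ∇ℓ(β°))|_∞` by `(1 + a)λ`. Convexity gives
`ℓ(β̂) ≥ ℓ(β°) − aλ |W(β̂ − β°)|_1`, and comparing the objective at β̂ and β° then gives
`Σ_k ‖W_k β̂_k‖ ≤ Σ_k ‖W_k β°_k‖ + a |W(β̂ − β°)|_1`. Group by group (with equality where `β°_k = 0`,
by the reverse triangle inequality elsewhere) this puts `ν = β̂ − β°` in the cone
`C_{a,W}`, and the definition of `ζ_{a,W}` yields `ζ_{a,W} |ν|_∞ ≤ (1 + a)λ`.
-/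

open scoped BigOperators Classical

/-- The group norm `‖W_k β_k‖`. -/
noncomputable def groupNorm {r : ℕ} {p : Fin r → ℕ}
    (w β : ((k : Fin r) × Fin (p k)) → ℝ) (k : Fin r) : ℝ :=
  Real.sqrt (∑ j : Fin (p k), (w ⟨k, j⟩ * β ⟨k, j⟩) ^ 2)

/-- The sup norm `|v|_∞`. -/
noncomputable def supNorm {ι : Type*} [Fintype ι] (v : ι → ℝ) : ℝ := ⨆ c, |v c|

/-- Coordinate `c` of the gradient `∇ℓ(β)`. -/
noncomputable def gradCoord {r : ℕ} {p : Fin r → ℕ}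
    (ℓ : (((k : Fin r) × Fin (p k)) → ℝ) → ℝ)
    (β : ((k : Fin r) × Fin (p k)) → ℝ) (c : (k : Fin r) × Fin (p k)) : ℝ :=
  fderiv ℝ ℓ β (Pi.single c 1)

/-- Membership in the cone `C_{a,W}` where `S = {k : βo_k ≠ 0}`. -/
def InCone {r : ℕ} {p : Fin r → ℕ}
    (βo w : ((k : Fin r) × Fin (p k)) → ℝ) (a : ℝ)
    (v : ((k : Fin r) × Fin (p k)) → ℝ) : Prop :=
  ∑ k : Fin r, (if ∀ j : Fin (p k), βo ⟨k, j⟩ = 0 then groupNorm w v k else 0)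
    ≤ ∑ k : Fin r, (if ∀ j : Fin (p k), βo ⟨k, j⟩ = 0 then 0 else groupNorm w v k)
      + a * ∑ c, |w c * v c|

/-- The Cone Invertibility Factor
`ζ_{a,W} = inf_{0 ≠ ν ∈ C_{a,W}} |W⁻¹(∇ℓ(β°+ν) − ∇ℓ(β°))|_∞ / |ν|_∞`. -/
noncomputable def cif {r : ℕ} {p : Fin r → ℕ}
    (ℓ : (((k : Fin r) × Fin (p k)) → ℝ) → ℝ)
    (βo w : ((k : Fin r) × Fin (p k)) → ℝ) (a : ℝ) : ℝ :=
  sInf {z : ℝ | ∃ ν : ((k : Fin r) × Fin (p k)) → ℝ, ν ≠ 0 ∧ InCone βo w a ν ∧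
    z = supNorm (fun c => (gradCoord ℓ (βo + ν) c - gradCoord ℓ βo c) / w c) / supNorm ν}

section LineDerivative

variable {E : Type*} [NormedAddCommGroup E] [NormedSpace ℝ E] {f : E → ℝ} {x : E}

theorem hasDerivAt_comp_add_smul (hf : DifferentiableAt ℝ f x) (e : E) :
    HasDerivAt (fun t : ℝ => f (x + t • e)) (fderiv ℝ f x e) 0 := by
  have hline : HasDerivAt (fun t : ℝ => x + t • e) e 0 := by
    simpa using ((hasDerivAt_id (0 : ℝ)).smul_const e).const_add x
  exact hf.hasFDerivAt.comp_hasDerivAt_of_eq 0 hline (by simp)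

theorem ConvexOn.add_fderiv_sub_le (hc : ConvexOn ℝ Set.univ f) (hf : DifferentiableAt ℝ f x)
    (y : E) : f x + fderiv ℝ f x (y - x) ≤ f y := by
  have hline : ConvexOn ℝ Set.univ (fun t : ℝ => f (x + t • (y - x))) := by
    simpa [Function.comp_def, AffineMap.lineMap_apply_module', add_comm] using
      hc.comp_affineMap (AffineMap.lineMap x y)
  have := hline.le_slope_of_hasDerivAt (Set.mem_univ 0) (Set.mem_univ 1) one_pos
    (hasDerivAt_comp_add_smul hf _)
  rw [slope_def_field] at this
  simp only [one_smul, zero_smul, add_zero, sub_zero, div_one, add_sub_cancel] at this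
  linarith

theorem le_fderiv_apply_of_forall_pos (hf : DifferentiableAt ℝ f x) {e : E} {K : ℝ}
    (h : ∀ t > 0, f x + t * K ≤ f (x + t • e)) : K ≤ fderiv ℝ f x e := by
  have hslope := (hasDerivAt_iff_tendsto_slope.mp (hasDerivAt_comp_add_smul hf e)).mono_left
    (nhdsWithin_mono _ fun t (ht : t ∈ Set.Ioi 0) => ht.ne')
  refine ge_of_tendsto hslope ?_
  filter_upwards [self_mem_nhdsWithin] with t (ht : 0 < t)
  rw [slope_def_field, sub_zero, le_div_iff₀ ht, zero_smul, add_zero]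
  linarith [h t ht]

end LineDerivative

section SupNorm

variable {ι : Type*} [Fintype ι]

theorem le_supNorm (v : ι → ℝ) (c : ι) : |v c| ≤ supNorm v :=
  le_ciSup (f := fun c => |v c|) (Set.finite_range _).bddAbove c

theorem supNorm_nonneg (v : ι → ℝ) : 0 ≤ supNorm v :=
  Real.iSup_nonneg fun _ => abs_nonneg _

theorem supNorm_pos {v : ι → ℝ} (hv : v ≠ 0) : 0 < supNorm v := by
  obtain ⟨c, hc⟩ := Function.ne_iff.mp hv
  exact (abs_pos.mpr hc).trans_le (le_supNorm v c)

theorem supNorm_zero : supNorm (0 : ι → ℝ) = 0 := by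
  simp [supNorm]

theorem supNorm_le {v : ι → ℝ} {M : ℝ} (h : ∀ c, |v c| ≤ M) (hM : 0 ≤ M) : supNorm v ≤ M :=
  Real.iSup_le h hM

theorem supNorm_sub_le (u v : ι → ℝ) : supNorm (u - v) ≤ supNorm u + supNorm v :=
  supNorm_le (fun c => (abs_sub _ _).trans (add_le_add (le_supNorm u c) (le_supNorm v c)))
    (add_nonneg (supNorm_nonneg u) (supNorm_nonneg v))

end SupNorm

section GroupNorm

variable {r : ℕ} {p : Fin r → ℕ} (w : ((k : Fin r) × Fin (p k)) → ℝ)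

theorem groupNorm_eq_norm (v : ((k : Fin r) × Fin (p k)) → ℝ) (k : Fin r) :
    groupNorm w v k = ‖WithLp.toLp 2 (fun j : Fin (p k) => w ⟨k, j⟩ * v ⟨k, j⟩)‖ := by
  simp only [groupNorm, EuclideanSpace.norm_eq, Real.norm_eq_abs, sq_abs]

theorem abs_groupNorm_sub_groupNorm_le (x y : ((k : Fin r) × Fin (p k)) → ℝ) (k : Fin r) :
    |groupNorm w x k - groupNorm w y k| ≤ groupNorm w (x - y) k := by
  have hsub : (fun j : Fin (p k) => w ⟨k, j⟩ * (x - y) ⟨k, j⟩)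
      = (fun j => w ⟨k, j⟩ * x ⟨k, j⟩) - fun j => w ⟨k, j⟩ * y ⟨k, j⟩ := by
    ext j
    simp [mul_sub]
  simp only [groupNorm_eq_norm, hsub, WithLp.toLp_sub]
  exact abs_norm_sub_norm_le _ _

theorem groupNorm_congr {x y : ((k : Fin r) × Fin (p k)) → ℝ} {k : Fin r}
    (h : ∀ j, x ⟨k, j⟩ = y ⟨k, j⟩) : groupNorm w x k = groupNorm w y k := by
  simp only [groupNorm, h]

theorem groupNorm_le_sum_abs (v : ((k : Fin r) × Fin (p k)) → ℝ) (k : Fin r) :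
    groupNorm w v k ≤ ∑ j, |w ⟨k, j⟩ * v ⟨k, j⟩| := by
  rw [groupNorm, Real.sqrt_le_left (Finset.sum_nonneg fun _ _ => abs_nonneg _)]
  simpa only [sq_abs] using
    Finset.sum_sq_le_sq_sum_of_nonneg (s := Finset.univ) fun j _ =>
      abs_nonneg (w ⟨k, j⟩ * v ⟨k, j⟩)

theorem sum_groupNorm_le_sum_abs (v : ((k : Fin r) × Fin (p k)) → ℝ) :
    ∑ k, groupNorm w v k ≤ ∑ c, |w c * v c| := by
  rw [Fintype.sum_sigma]
  exact Finset.sum_le_sum fun k _ => groupNorm_le_sum_abs w v k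

theorem sum_groupNorm_add_le (x v : ((k : Fin r) × Fin (p k)) → ℝ) :
    ∑ k, groupNorm w (x + v) k ≤ ∑ k, groupNorm w x k + ∑ c, |w c * v c| :=
  calc ∑ k, groupNorm w (x + v) k ≤ ∑ k, (groupNorm w x k + groupNorm w v k) := by
        refine Finset.sum_le_sum fun k _ => ?_
        have := abs_groupNorm_sub_groupNorm_le w (x + v) x k
        rw [add_sub_cancel_left] at this
        linarith [le_abs_self (groupNorm w (x + v) k - groupNorm w x k)]
    _ ≤ ∑ k, groupNorm w x k + ∑ c, |w c * v c| := by
        rw [Finset.sum_add_distrib]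
        gcongr
        exact sum_groupNorm_le_sum_abs w v

end GroupNorm

section GroupLasso

variable {r : ℕ} {p : Fin r → ℕ} {w : ((k : Fin r) × Fin (p k)) → ℝ}

theorem groupNorm_offSupport_sub_onSupport_le (βo ν : ((k : Fin r) × Fin (p k)) → ℝ)
    (k : Fin r) :
    (if ∀ j : Fin (p k), βo ⟨k, j⟩ = 0 then groupNorm w ν k else 0)
        - (if ∀ j : Fin (p k), βo ⟨k, j⟩ = 0 then 0 else groupNorm w ν k)
      ≤ groupNorm w (βo + ν) k - groupNorm w βo k := by
  split_ifs with hk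
  · rw [groupNorm_congr w (x := βo + ν) (y := ν) fun j => by simp [hk j],
      groupNorm_congr w (x := βo) (y := 0) hk]
    simp [groupNorm]
  · have := abs_groupNorm_sub_groupNorm_le w (βo + ν) βo k
    rw [add_sub_cancel_left] at this
    linarith [neg_abs_le (groupNorm w (βo + ν) k - groupNorm w βo k)]

theorem inCone_of_sum_groupNorm_add_le {βo ν : ((k : Fin r) × Fin (p k)) → ℝ} {a : ℝ}
    (h : ∑ k, groupNorm w (βo + ν) k ≤ ∑ k, groupNorm w βo k + a * ∑ c, |w c * ν c|) :
    InCone βo w a ν := by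
  have hsplit := Finset.sum_le_sum fun k (_ : k ∈ Finset.univ) =>
    groupNorm_offSupport_sub_onSupport_le (w := w) βo ν k
  rw [Finset.sum_sub_distrib, Finset.sum_sub_distrib] at hsplit
  unfold InCone
  linarith

variable {ℓ : (((k : Fin r) × Fin (p k)) → ℝ) → ℝ}

theorem fderiv_apply_eq_sum_gradCoord (β ν : ((k : Fin r) × Fin (p k)) → ℝ) :
    fderiv ℝ ℓ β ν = ∑ c, ν c * gradCoord ℓ β c := by
  conv_lhs => rw [← Finset.univ_sum_single ν]
  rw [map_sum]
  refine Finset.sum_congr rfl fun c _ => ?_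
  rw [gradCoord, ← smul_eq_mul, ← map_smul, ← Pi.single_smul', smul_eq_mul, mul_one]

theorem abs_gradCoord_le_iff {β : ((k : Fin r) × Fin (p k)) → ℝ} {M : ℝ} :
    (∀ c, |gradCoord ℓ β c| ≤ M * |w c|) ↔
      ∀ ν, -(M * ∑ c, |w c * ν c|) ≤ fderiv ℝ ℓ β ν := by
  constructor
  · intro h ν
    rw [fderiv_apply_eq_sum_gradCoord, Finset.mul_sum, ← Finset.sum_neg_distrib]
    refine Finset.sum_le_sum fun c _ => ?_
    have hc : |ν c * gradCoord ℓ β c| ≤ M * |w c * ν c| :=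
      calc |ν c * gradCoord ℓ β c| = |ν c| * |gradCoord ℓ β c| := abs_mul _ _
        _ ≤ |ν c| * (M * |w c|) := mul_le_mul_of_nonneg_left (h c) (abs_nonneg _)
        _ = M * |w c * ν c| := by rw [abs_mul]; ring
    linarith [neg_abs_le (ν c * gradCoord ℓ β c)]
  · intro h c
    have hsum : ∀ s : ℝ, ∑ d, |w d * (Pi.single c s : _ → ℝ) d| = |w c| * |s| := by
      intro s
      simp [Pi.single_apply, apply_ite abs, abs_mul]
    have hpos := h (Pi.single c 1)
    have hneg := h (Pi.single c (-1))
    rw [hsum] at hpos hneg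
    rw [Pi.single_neg, map_neg] at hneg
    rw [gradCoord, abs_le]
    constructor <;> simp only [abs_one, abs_neg, mul_one] at hpos hneg <;> linarith

variable {lam : ℝ} {βhat : ((k : Fin r) × Fin (p k)) → ℝ}

theorem abs_gradCoord_le_of_isMinOn (hlam : 0 ≤ lam) (hdiff : DifferentiableAt ℝ ℓ βhat)
    (hmin : IsMinOn (fun β => ℓ β + lam * ∑ k, groupNorm w β k) Set.univ βhat)
    (c : (k : Fin r) × Fin (p k)) : |gradCoord ℓ βhat c| ≤ lam * |w c| := by
  refine abs_gradCoord_le_iff.mpr (fun ν => le_fderiv_apply_of_forall_pos hdiff fun t ht => ?_) c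
  have hpen := sum_groupNorm_add_le w βhat (t • ν)
  have hscale : ∑ c, |w c * (t • ν) c| = t * ∑ c, |w c * ν c| := by
    simp only [Pi.smul_apply, smul_eq_mul, Finset.mul_sum, abs_mul, abs_of_pos ht]
    exact Finset.sum_congr rfl fun _ _ => by ring
  have hopt := isMinOn_univ_iff.mp hmin (βhat + t • ν)
  rw [hscale] at hpen
  linarith [mul_le_mul_of_nonneg_left hpen hlam]

theorem sum_groupNorm_le_of_isMinOn {βo : ((k : Fin r) × Fin (p k)) → ℝ} {a : ℝ}
    (hconv : ConvexOn ℝ Set.univ ℓ) (hdiff : DifferentiableAt ℝ ℓ βo) (hlam : 0 < lam)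
    (hmin : IsMinOn (fun β => ℓ β + lam * ∑ k, groupNorm w β k) Set.univ βhat)
    (hgrad : ∀ c, |gradCoord ℓ βo c| ≤ a * lam * |w c|) :
    ∑ k, groupNorm w βhat k ≤ ∑ k, groupNorm w βo k + a * ∑ c, |w c * (βhat - βo) c| := by
  have hlin := hconv.add_fderiv_sub_le hdiff βhat
  have hdual := abs_gradCoord_le_iff.mp hgrad (βhat - βo)
  have hopt := isMinOn_univ_iff.mp hmin βo
  refine le_of_mul_le_mul_left ?_ hlam
  linarith

theorem cif_mul_supNorm_le {βo ν : ((k : Fin r) × Fin (p k)) → ℝ} {a : ℝ}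
    (hν : InCone βo w a ν) :
    cif ℓ βo w a * supNorm ν
      ≤ supNorm (fun c => (gradCoord ℓ (βo + ν) c - gradCoord ℓ βo c) / w c) := by
  rcases eq_or_ne ν 0 with rfl | hν0
  · rw [supNorm_zero, mul_zero]
    exact supNorm_nonneg _
  · rw [← le_div_iff₀ (supNorm_pos hν0)]
    refine csInf_le ⟨0, ?_⟩ ⟨ν, hν0, hν, rfl⟩
    rintro _ ⟨ν', -, -, rfl⟩
    exact div_nonneg (supNorm_nonneg _) (supNorm_nonneg _)

end GroupLasso

theorem groupLasso_linf_bound_general {r : ℕ} {p : Fin r → ℕ}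
    (ℓ : (((k : Fin r) × Fin (p k)) → ℝ) → ℝ)
    (hconv : ConvexOn ℝ Set.univ ℓ) (hdiff : Differentiable ℝ ℓ)
    (w : ((k : Fin r) × Fin (p k)) → ℝ) (hw : ∀ c, 0 < w c)
    (a : ℝ)
    (lam : ℝ) (hlam : 0 < lam)
    (βhat βo : ((k : Fin r) × Fin (p k)) → ℝ)
    (hmin : ∀ β : ((k : Fin r) × Fin (p k)) → ℝ,
      ℓ βhat + lam * ∑ k : Fin r, groupNorm w βhat k
        ≤ ℓ β + lam * ∑ k : Fin r, groupNorm w β k)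
    (hgrad : (⨆ c : (k : Fin r) × Fin (p k), |gradCoord ℓ βo c / w c|) ≤ a * lam)
    (hζ : 0 < cif ℓ βo w a) :
    supNorm (fun c => βhat c - βo c) ≤ (1 + a) * lam / cif ℓ βo w a := by
  have hmin' : IsMinOn (fun β => ℓ β + lam * ∑ k, groupNorm w β k) Set.univ βhat :=
    isMinOn_univ_iff.mpr hmin
  have hgrad_o (c) : |gradCoord ℓ βo c| ≤ a * lam * |w c| := by
    have := (le_supNorm (fun c => gradCoord ℓ βo c / w c) c).trans hgrad
    rwa [abs_div, div_le_iff₀ (abs_pos.mpr (hw c).ne')] at this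
  have hgrad_hat : supNorm (fun c => gradCoord ℓ βhat c / w c) ≤ lam := by
    refine supNorm_le (fun c => ?_) hlam.le
    rw [abs_div, div_le_iff₀ (abs_pos.mpr (hw c).ne')]
    exact abs_gradCoord_le_of_isMinOn hlam.le (hdiff βhat) hmin' c
  have hcone : InCone βo w a (βhat - βo) := by
    refine inCone_of_sum_groupNorm_add_le ?_
    rw [add_sub_cancel]
    exact sum_groupNorm_le_of_isMinOn hconv (hdiff βo) hlam hmin' hgrad_o
  have hcif := cif_mul_supNorm_le (ℓ := ℓ) hcone
  rw [add_sub_cancel] at hcif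
  rw [le_div_iff₀ hζ]
  calc supNorm (fun c => βhat c - βo c) * cif ℓ βo w a
      = cif ℓ βo w a * supNorm (βhat - βo) := mul_comm _ _
    _ ≤ supNorm ((fun c => gradCoord ℓ βhat c / w c) - fun c => gradCoord ℓ βo c / w c) :=
        hcif.trans_eq (congrArg supNorm (funext fun c => sub_div _ _ _))
    _ ≤ lam + a * lam := (supNorm_sub_le _ _).trans (add_le_add hgrad_hat hgrad)
    _ = (1 + a) * lam := by ring

/-- `ℓ_∞` estimation error bound for the Group Lasso:
if `|W⁻¹ ∇ℓ(β°)|_∞ ≤ aλ` and `ζ_{a,W} > 0`, then `|β̂ − β°|_∞ ≤ (1+a) λ / ζ_{a,W}`. -/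
theorem groupLasso_linf_bound {r : ℕ} {p : Fin r → ℕ}
    (ℓ : (((k : Fin r) × Fin (p k)) → ℝ) → ℝ)
    (hconv : ConvexOn ℝ Set.univ ℓ) (hdiff : Differentiable ℝ ℓ)
    (w : ((k : Fin r) × Fin (p k)) → ℝ) (hw : ∀ c, 0 < w c)
    (a : ℝ) (ha : a ∈ Set.Ioo (0 : ℝ) 1)
    (lam : ℝ) (hlam : 0 < lam)
    (βhat βo : ((k : Fin r) × Fin (p k)) → ℝ)
    (hmin : ∀ β : ((k : Fin r) × Fin (p k)) → ℝ,
      ℓ βhat + lam * ∑ k : Fin r, groupNorm w βhat k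
        ≤ ℓ β + lam * ∑ k : Fin r, groupNorm w β k)
    (hgrad : (⨆ c : (k : Fin r) × Fin (p k), |gradCoord ℓ βo c / w c|) ≤ a * lam)
    (hζ : 0 < cif ℓ βo w a) :
    supNorm (fun c => βhat c - βo c) ≤ (1 + a) * lam / cif ℓ βo w a :=
  groupLasso_linf_bound_general ℓ hconv hdiff w hw a lam hlam βhat βo hmin hgrad hζ
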